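/- arXiv:2502.12141 — 3 statements merged into one kernel-verified Lean document; each statement's English description precedes it below -/
import Mathlib

section
/- Let β > 0 and real numbers cY1, cY2, cZ12, a₁, a₂, c₁₂ satisfy cY1 = β·(1 + a₁), cY2 = β·(1 + a₂), cZ12 = 1 + a₁ + a₂ + c₁₂, c₁₂ ≥ 0, and 1 + cZ12 > 0. Then β ≥ (cY1 + cY2) / (1 + cZ12). -/
theorem stmt_6 (β cY1 cY2 cZ12 a₁ a₂ c₁₂ : ℝ) (hβ : 0 < β)
    (h1 : cY1 = β * (1 + a₁)) (h2 : cY2 = β * (1 + a₂))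
    (h3 : cZ12 = 1 + a₁ + a₂ + c₁₂) (hc : 0 ≤ c₁₂) (hden : 0 < 1 + cZ12) :
    β ≥ (cY1 + cY2) / (1 + cZ12) := by
  rw [ge_iff_le, div_le_iff₀ hden]
  nlinarith [mul_nonneg hβ.le hc]
end

section
/- Let β ≥ 0 and real numbers vY > 0, cY1, cY2, vZ1, vZ2, cZ12 with cY1 ≥ 0, cY2 ≥ 0, cZ12 > -1, and suppose there exist reals vε ≥ 0, vU1 ≥ 0, vU2 ≥ 0, a₁, a₂, c₁₂ ≥ 0 such that vY = β² + vε, vZ1 = 1 + vU1 + 2a₁, vZ2 = 1 + vU2 + 2a₂, cY1 = β(1+a₁), cY2 = β(1+a₂), and cZ12 = 1 + a₁ + a₂ + c₁₂. Then max{(cY1+cY2)/(1+cZ12), 2cY1/(1+vZ1), 2cY2/(1+vZ2)} ≤ β ≤ √vY. -/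
theorem stmt_7 (β vY cY1 cY2 vZ1 vZ2 cZ12 vε vU1 vU2 a₁ a₂ c₁₂ : ℝ)
    (hβ : 0 ≤ β) (hvY : 0 < vY) (hcY1 : 0 ≤ cY1) (hcY2 : 0 ≤ cY2)
    (hcZ12 : -1 < cZ12)
    (hvε : 0 ≤ vε) (hvU1 : 0 ≤ vU1) (hvU2 : 0 ≤ vU2) (hc₁₂ : 0 ≤ c₁₂)
    (h1 : vY = β ^ 2 + vε)
    (h2 : vZ1 = 1 + vU1 + 2 * a₁)
    (h3 : vZ2 = 1 + vU2 + 2 * a₂)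
    (h4 : cY1 = β * (1 + a₁))
    (h5 : cY2 = β * (1 + a₂))
    (h6 : cZ12 = 1 + a₁ + a₂ + c₁₂) :
    max (max ((cY1 + cY2) / (1 + cZ12)) (2 * cY1 / (1 + vZ1))) (2 * cY2 / (1 + vZ2)) ≤ β
      ∧ β ≤ Real.sqrt vY := by
  have hsqrt : β ≤ Real.sqrt vY := by
    rw [show vY = β ^ 2 + vε from h1]
    nlinarith [Real.sq_sqrt (by nlinarith : (0:ℝ) ≤ β ^ 2 + vε),
      Real.sqrt_nonneg (β ^ 2 + vε)]
  have key : ∀ num den : ℝ, 0 ≤ den → num ≤ β * den → num / den ≤ β := by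
    intro num den hd h
    rcases eq_or_lt_of_le hd with h0 | h0
    · simp [← h0]
      exact hβ
    · rw [div_le_iff₀ h0]
      linarith [h]
  refine ⟨max_le (max_le ?_ ?_) ?_, hsqrt⟩
  · apply key _ _ (by linarith)
    nlinarith [mul_nonneg hβ hc₁₂]
  · rcases eq_or_lt_of_le hβ with hb | hb
    · rw [← hb] at h4
      simp [h4, ← hb]
    · have ha1 : 0 ≤ 1 + a₁ := by nlinarith
      apply key _ _ (by nlinarith)
      nlinarith [mul_nonneg hβ hvU1]
  · rcases eq_or_lt_of_le hβ with hb | hb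
    · rw [← hb] at h5
      simp [h5, ← hb]
    · have ha2 : 0 ≤ 1 + a₂ := by nlinarith
      apply key _ _ (by nlinarith)
      nlinarith [mul_nonneg hβ hvU2]
end

section
/- Let β > 0 and real numbers cY1, cY2, vZ1, vZ2, a₁, a₂, vU1, vU2 satisfy cY1 = β(1+a₁), cY2 = β(1+a₂), vZ1 = 1 + vU1 + 2a₁, vZ2 = 1 + vU2 + 2a₂, and vU1 ≥ vU2 (the second proxy is better). If vZ1 > vZ2, then β ≥ 2·(cY1 − cY2)/(vZ1 − vZ2); if vZ1 < vZ2, then β ≤ 2·(cY1 − cY2)/(vZ1 − vZ2). -/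
theorem stmt_13 (β cY1 cY2 vZ1 vZ2 a₁ a₂ vU1 vU2 : ℝ) (hβ : 0 < β)
    (h1 : cY1 = β * (1 + a₁)) (h2 : cY2 = β * (1 + a₂))
    (h3 : vZ1 = 1 + vU1 + 2 * a₁) (h4 : vZ2 = 1 + vU2 + 2 * a₂)
    (hU : vU1 ≥ vU2) :
    (vZ1 > vZ2 → β ≥ 2 * (cY1 - cY2) / (vZ1 - vZ2)) ∧
      (vZ1 < vZ2 → β ≤ 2 * (cY1 - cY2) / (vZ1 - vZ2)) := by
  have key : 2 * (cY1 - cY2) ≤ β * (vZ1 - vZ2) := by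
    subst h1 h2 h3 h4; nlinarith
  constructor
  · intro h
    rw [ge_iff_le, div_le_iff₀ (by linarith)]
    linarith [key]
  · intro h
    rw [le_div_iff_of_neg (by linarith)]
    linarith [key]
end
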